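/- (Lemma 2.2: detecting the eliminated bit.) Let n ≥ 1, let j ∈ Fin n, and let f : 𝔽₂ⁿ → 𝔽₂^(n−1) be the function that deletes the j-th bit, i.e. f(x)_k = x_(ι k) where ι : Fin (n−1) → Fin n is the strictly monotone embedding that skips j (ι k = j.succAbove k). Then for every i ∈ Fin (n−1) and every z ∈ 𝔽₂ⁿ: (1/2ⁿ) Σ_{x ∈ 𝔽₂ⁿ} (−1)^( (f(x)·e_i) ⊕ (x·z) ) equals 1 if z = e_(ι i) and 0 otherwise. Consequently, the n−1 outputs of the GPK algorithm run with the markers e_0, …, e_(n−2) are exactly the standard basis vectors {e_k : k ∈ Fin n, k ≠ j}, and the missing basis vector e_j identifies the eliminated bit. -/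
import Mathlib


/-- The sign `(−1)^a ∈ ℂ` associated to a bit `a ∈ 𝔽₂`. -/
noncomputable def sgn (a : ZMod 2) : ℂ := (-1 : ℂ) ^ a.val

/-- The pairing `x·z = Σᵢ xᵢ·zᵢ ∈ 𝔽₂` of two binary strings. -/
def dotp {k : ℕ} (x z : Fin k → ZMod 2) : ZMod 2 := ∑ i, x i * z i

/-- The `i`-th standard basis vector of `𝔽₂ᵏ`. -/
def stdBasis {k : ℕ} (i : Fin k) : Fin k → ZMod 2 :=
  fun j => if j = i then 1 else 0

lemma sgn_add (a b : ZMod 2) : sgn (a + b) = sgn a * sgn b := by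
  have h : ∀ c : ZMod 2, c = 0 ∨ c = 1 := by decide
  rcases h a with ha | ha <;> rcases h b with hb | hb <;>
    subst ha <;> subst hb <;>
    simp [sgn, show ((1:ZMod 2)+1) = 0 by decide, ZMod.val_one, ZMod.val_zero]

lemma dotp_stdBasis {m : ℕ} (x : Fin m → ZMod 2) (i : Fin m) :
    dotp x (stdBasis i) = x i := by
  simp [dotp, stdBasis]

lemma dotp_add_right {m : ℕ} (x w z : Fin m → ZMod 2) :
    dotp x (w + z) = dotp x w + dotp x z := by
  simp [dotp, mul_add, Finset.sum_add_distrib]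

lemma dotp_add_left {m : ℕ} (x w z : Fin m → ZMod 2) :
    dotp (x + w) z = dotp x z + dotp w z := by
  simp [dotp, add_mul, Finset.sum_add_distrib]

lemma sum_sgn_dotp {m : ℕ} (w : Fin m → ZMod 2) :
    ∑ x : Fin m → ZMod 2, sgn (dotp x w) = if w = 0 then (2:ℂ)^m else 0 := by
  split_ifs with h
  · subst h
    have : ∀ x : Fin m → ZMod 2, sgn (dotp x 0) = 1 := by
      intro x; simp [dotp, sgn]
    simp only [this, Finset.sum_const, Finset.card_univ]
    simp [Fintype.card_fun]
  · obtain ⟨i0, hi0⟩ : ∃ i0, w i0 ≠ 0 := by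
      by_contra hc
      push_neg at hc
      exact h (funext fun k => hc k)
    have hw1 : w i0 = 1 := by
      have h2 : ∀ c : ZMod 2, c = 0 ∨ c = 1 := by decide
      rcases h2 (w i0) with h' | h' <;> simp_all
    have key : ∀ x, sgn (dotp (x + stdBasis i0) w) = - sgn (dotp x w) := by
      intro x
      have hd : dotp (stdBasis i0) w = 1 := by
        simp [dotp, stdBasis, hw1]
      rw [dotp_add_left, hd, sgn_add]
      simp [sgn, ZMod.val_one]
    have heq : ∑ x : Fin m → ZMod 2, sgn (dotp x w)
        = ∑ x : Fin m → ZMod 2, - sgn (dotp x w) :=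
      Fintype.sum_equiv (Equiv.addRight (stdBasis i0)) _ _ (fun x => by
        simp [Equiv.coe_addRight, key x])
    have : (2:ℂ) * ∑ x : Fin m → ZMod 2, sgn (dotp x w) = 0 := by
      rw [Finset.sum_neg_distrib] at heq
      linear_combination heq
    have h2 : (2:ℂ) ≠ 0 := two_ne_zero
    exact (mul_eq_zero.mp this).resolve_left h2

/-- Lemma 2.2 (detecting the eliminated bit), stated with `n ≥ 1` realised as
`n + 1`.  Let `f : 𝔽₂^(n+1) → 𝔽₂ⁿ` delete the `j`-th bit, i.e.
`f(x)_k = x_(j.succAbove k)`.  Then for every marker `e_i` and every `z`, the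
amplitude `(1/2^(n+1)) Σ_x (−1)^((f(x)·e_i) ⊕ (x·z))` is `1` if
`z = e_(j.succAbove i)` and `0` otherwise; consequently the outputs of the GPK
algorithm with the markers `e_0, …, e_(n−1)` are exactly the standard basis
vectors `e_k` for `k ≠ j`, identifying the eliminated bit `j`. -/
theorem gpk_detects_eliminated_bit (n : ℕ) (j : Fin (n + 1))
    (f : (Fin (n + 1) → ZMod 2) → (Fin n → ZMod 2))
    (hf : ∀ x k, f x k = x (j.succAbove k)) :
    (∀ (i : Fin n) (z : Fin (n + 1) → ZMod 2),
      ((2 : ℂ) ^ (n + 1))⁻¹ *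
          ∑ x : Fin (n + 1) → ZMod 2, sgn (dotp (f x) (stdBasis i) + dotp x z) =
        (if z = stdBasis (j.succAbove i) then 1 else 0)) ∧
    Set.range (fun i : Fin n => stdBasis (j.succAbove i)) =
      {v : Fin (n + 1) → ZMod 2 | ∃ k : Fin (n + 1), k ≠ j ∧ v = stdBasis k} := by
  constructor
  · intro i z
    have hterm : ∀ x, sgn (dotp (f x) (stdBasis i) + dotp x z)
        = sgn (dotp x (stdBasis (j.succAbove i) + z)) := by
      intro x
      rw [dotp_stdBasis, hf, dotp_add_right, dotp_stdBasis]
    simp only [hterm, sum_sgn_dotp]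
    have hiff : stdBasis (j.succAbove i) + z = 0 ↔ z = stdBasis (j.succAbove i) := by
      constructor
      · intro h; funext k
        have := congrFun h k
        have h2 : ∀ a b : ZMod 2, a + b = 0 → b = a := by decide
        exact h2 _ _ this
      · intro h; subst h; funext k
        have h2 : ∀ a : ZMod 2, a + a = 0 := by decide
        exact h2 _
    split_ifs with h1 h2 h2
    · rw [inv_mul_cancel₀]; exact pow_ne_zero _ two_ne_zero
    · exact absurd (hiff.mp h1) h2
    · exact absurd (hiff.mpr h2) h1
    · simp
  · ext v
    simp only [Set.mem_range, Set.mem_setOf_eq]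
    constructor
    · rintro ⟨i, rfl⟩
      exact ⟨j.succAbove i, Fin.succAbove_ne j i, rfl⟩
    · rintro ⟨k, hk, rfl⟩
      obtain ⟨i, rfl⟩ := Fin.exists_succAbove_eq hk
      exact ⟨i, rfl⟩
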